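/- For the torus with radii R > r > 0 and any u, v, θ, φ ∈ ℝ, setting X = p(u, θ), Y = p(v, φ), Z₁ = p(v, θ), Z₂ = p(u, φ), the four points form an isosceles trapezoid and one has the exact identity ‖X − Y‖² = ‖X − Z₂‖² + ‖X − Z₁‖ · ‖Y − Z₂‖, where ‖·‖ is the Euclidean norm on ℝ³. -/

import Mathlib

/-!
A torus point `p(u, θ)` is the point with cylindrical coordinates `(R - r cos θ, u, r sin θ)`.
By the law of cosines and the half-angle formula, two points with cylindrical coordinates
`(ρ₁, u, z₁)` and `(ρ₂, v, z₂)` are at squared distance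
`(ρ₁ - ρ₂)² + (z₁ - z₂)² + 4 ρ₁ ρ₂ sin² ((u - v) / 2)`.
The first two terms are the squared distance at equal longitudes, i.e. `‖X - Z₂‖²`, and the
two horizontal legs of the trapezoid have lengths `2 ρᵢ |sin ((u - v) / 2)|`, whose product is
the last term as soon as `ρ₁ ρ₂ ≥ 0`, which holds on the torus because `R > r > 0`.
-/

open Real

/-- The torus of radii `(R, r)` parametrized by longitude `u` and latitude `θ`,
as a point of Euclidean 3-space. -/
noncomputable def torusPoint (R r u θ : ℝ) : EuclideanSpace ℝ (Fin 3) :=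
  (WithLp.equiv 2 (Fin 3 → ℝ)).symm
    ![(R - r * Real.cos θ) * Real.cos u, (R - r * Real.cos θ) * Real.sin u, r * Real.sin θ]

noncomputable def cylindricalPoint (ρ u z : ℝ) : EuclideanSpace ℝ (Fin 3) :=
  (WithLp.equiv 2 (Fin 3 → ℝ)).symm ![ρ * cos u, ρ * sin u, z]

theorem torusPoint_eq_cylindricalPoint (R r u θ : ℝ) :
    torusPoint R r u θ = cylindricalPoint (R - r * cos θ) u (r * sin θ) :=
  rfl

theorem norm_cylindricalPoint_sub_sq (ρ₁ ρ₂ u v z₁ z₂ : ℝ) :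
    ‖cylindricalPoint ρ₁ u z₁ - cylindricalPoint ρ₂ v z₂‖ ^ 2 =
      (ρ₁ - ρ₂) ^ 2 + (z₁ - z₂) ^ 2 + 4 * ρ₁ * ρ₂ * sin ((u - v) / 2) ^ 2 := by
  have half_angle : cos (u - v) = 1 - 2 * sin ((u - v) / 2) ^ 2 := by
    rw [← cos_two_mul_eq_one_sub, mul_div_cancel₀ _ two_ne_zero]
  rw [EuclideanSpace.norm_eq, sq_sqrt (by positivity)]
  simp only [cylindricalPoint, Fin.sum_univ_three, WithLp.equiv_symm_apply, PiLp.sub_apply,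
    Matrix.cons_val_zero, Matrix.cons_val_one, Matrix.cons_val, norm_eq_abs, sq_abs]
  linear_combination ρ₁ ^ 2 * sin_sq_add_cos_sq u + ρ₂ ^ 2 * sin_sq_add_cos_sq v
    + 2 * ρ₁ * ρ₂ * cos_sub u v - 2 * ρ₁ * ρ₂ * half_angle

theorem norm_cylindricalPoint_sub_of_eq_height (ρ u v z : ℝ) :
    ‖cylindricalPoint ρ u z - cylindricalPoint ρ v z‖ = 2 * |ρ| * |sin ((u - v) / 2)| := by
  rw [← sq_eq_sq₀ (norm_nonneg _) (by positivity), norm_cylindricalPoint_sub_sq,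
    mul_pow, mul_pow, sq_abs, sq_abs]
  ring

theorem norm_cylindricalPoint_sub_sq_eq_add_mul {ρ₁ ρ₂ : ℝ} (hρ : 0 ≤ ρ₁ * ρ₂)
    (u v z₁ z₂ : ℝ) :
    ‖cylindricalPoint ρ₁ u z₁ - cylindricalPoint ρ₂ v z₂‖ ^ 2 =
      ‖cylindricalPoint ρ₁ u z₁ - cylindricalPoint ρ₂ u z₂‖ ^ 2 +
        ‖cylindricalPoint ρ₁ u z₁ - cylindricalPoint ρ₁ v z₁‖ *
          ‖cylindricalPoint ρ₂ v z₂ - cylindricalPoint ρ₂ u z₂‖ := by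
  have abs_mul_abs : |ρ₁| * |ρ₂| = ρ₁ * ρ₂ := by rw [← abs_mul, abs_of_nonneg hρ]
  rw [norm_cylindricalPoint_sub_sq, norm_cylindricalPoint_sub_sq, sub_self, zero_div, sin_zero,
    norm_cylindricalPoint_sub_of_eq_height, norm_cylindricalPoint_sub_of_eq_height,
    ← neg_sub u v, neg_div, sin_neg, abs_neg]
  linear_combination -4 * |sin ((u - v) / 2)| ^ 2 * abs_mul_abs
    - 4 * ρ₁ * ρ₂ * abs_mul_abs_self (sin ((u - v) / 2))

theorem sub_mul_cos_nonneg {R r : ℝ} (h : |r| ≤ R) (θ : ℝ) : 0 ≤ R - r * cos θ := by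
  have : r * cos θ ≤ |r| := by
    calc r * cos θ ≤ |r * cos θ| := le_abs_self _
      _ = |r| * |cos θ| := abs_mul r (cos θ)
      _ ≤ |r| := mul_le_of_le_one_right (abs_nonneg r) (abs_cos_le_one θ)
  linarith

/-- For the torus with radii `R > r > 0` and any `u, v, θ, φ ∈ ℝ`, setting
`X = p(u, θ)`, `Y = p(v, φ)`, `Z₁ = p(v, θ)`, `Z₂ = p(u, φ)`, one has the exact identity
`‖X − Y‖² = ‖X − Z₂‖² + ‖X − Z₁‖ · ‖Y − Z₂‖` (isosceles trapezoid identity). -/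
theorem torus_trapezoid_identity (R r : ℝ) (hRr : R > r) (hr : r > 0)
    (u v θ φ : ℝ) :
    ‖torusPoint R r u θ - torusPoint R r v φ‖ ^ 2 =
      ‖torusPoint R r u θ - torusPoint R r u φ‖ ^ 2 +
        ‖torusPoint R r u θ - torusPoint R r v θ‖ *
          ‖torusPoint R r v φ - torusPoint R r u φ‖ := by
  have hρ : ∀ θ, 0 ≤ R - r * cos θ := sub_mul_cos_nonneg (by rw [abs_of_pos hr]; exact hRr.le)
  simp only [torusPoint_eq_cylindricalPoint]
  exact norm_cylindricalPoint_sub_sq_eq_add_mul (mul_nonneg (hρ θ) (hρ φ)) u v _ _
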